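/- Let β > 0 and s, t ∈ (0,1/2). If 1 − 3s = (1/β)·log((1−2t)/t) and 1 − 3t = (1/β)·log((1−2s)/s), then s = t. -/
import Mathlib

open Real Set

/-- if s, t ∈ (0,1/2) satisfy 1 − 3s = (1/β) log((1−2t)/t) and
1 − 3t = (1/β) log((1−2s)/s) with β > 0, then s = t. -/
theorem stmt_6 (β : ℝ) (hβ : 0 < β)
    (s t : ℝ) (hs : s ∈ Ioo (0 : ℝ) (1 / 2)) (ht : t ∈ Ioo (0 : ℝ) (1 / 2))
    (h₁ : 1 - 3 * s = (1 / β) * Real.log ((1 - 2 * t) / t))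
    (h₂ : 1 - 3 * t = (1 / β) * Real.log ((1 - 2 * s) / s)) :
    s = t := by
  obtain ⟨hs0, hs2⟩ := hs
  obtain ⟨ht0, ht2⟩ := ht
  have hβ' : β ≠ 0 := ne_of_gt hβ
  have key : ∀ a b : ℝ, 0 < a → a < 1/2 → 0 < b → b < 1/2 → a < b →
      (1 - 2 * b) / b < (1 - 2 * a) / a := by
    intro a b ha ha2 hb hb2 hab
    rw [div_lt_div_iff₀ hb ha]
    nlinarith
  have e₁ : Real.log ((1 - 2 * t) / t) = β * (1 - 3 * s) := by
    field_simp at h₁; linarith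
  have e₂ : Real.log ((1 - 2 * s) / s) = β * (1 - 3 * t) := by
    field_simp at h₂; linarith
  rcases lt_trichotomy s t with h | h | h
  · exfalso
    have hlt := key s t hs0 hs2 ht0 ht2 h
    have hpos : 0 < (1 - 2 * t) / t := div_pos (by linarith) ht0
    have := Real.log_lt_log hpos hlt
    rw [e₁, e₂] at this
    nlinarith
  · exact h
  · exfalso
    have hlt := key t s ht0 ht2 hs0 hs2 h
    have hpos : 0 < (1 - 2 * s) / s := div_pos (by linarith) hs0
    have := Real.log_lt_log hpos hlt
    rw [e₁, e₂] at this
    nlinarith
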